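/- arXiv:2408.01870 — 3 statements merged into one kernel-verified Lean document; each statement's English description precedes it below -/
import Mathlib

section
/- The product of two scattered topological spaces is scattered. -/
/-- A space is scattered if every nonempty subset has a point isolated in it. -/
def Scattered (X : Type*) [TopologicalSpace X] : Prop :=
  ∀ S : Set X, S.Nonempty → ∃ x ∈ S, ∃ U : Set X, IsOpen U ∧ U ∩ S = {x}

theorem stmt_3 {X Y : Type*} [TopologicalSpace X] [TopologicalSpace Y]
    (hX : Scattered X) (hY : Scattered Y) : Scattered (X × Y) := by
  intro S hS
  obtain ⟨x, hxS, U, hU, hUeq⟩ := hX (Prod.fst '' S) (hS.image _)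
  obtain ⟨⟨x, y0⟩, hmem, rfl⟩ := hxS
  obtain ⟨y, hyT, V, hV, hVeq⟩ := hY {y | (x, y) ∈ S} ⟨y0, hmem⟩
  refine ⟨(x, y), hyT, U ×ˢ V, hU.prod hV, ?_⟩
  ext ⟨a, b⟩
  constructor
  · rintro ⟨⟨haU, hbV⟩, habS⟩
    have ha : a = x := by
      have : a ∈ U ∩ Prod.fst '' S := ⟨haU, ⟨(a, b), habS, rfl⟩⟩
      rw [hUeq] at this; exact this
    subst ha
    have hb : b = y := by
      have : b ∈ V ∩ {y | (a, y) ∈ S} := ⟨hbV, habS⟩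
      rw [hVeq] at this; exact this
    simp [hb]
  · rintro h
    have : (a, b) = (x, y) := h
    rw [this]
    have hxU : x ∈ U := by
      have : x ∈ ({x} : Set X) := rfl
      rw [← hUeq] at this; exact this.1
    have hyV : y ∈ V := by
      have : y ∈ ({y} : Set Y) := rfl
      rw [← hVeq] at this; exact this.1
    exact ⟨⟨hxU, hyV⟩, hyT⟩
end

section
/- Let f : X → Y be a continuous map with finite fibers between topological spaces, where X is T₁, and suppose Y is a λ-space. Then X is a λ-space. -/
/-- A λ-space: every countable subset is a Gδ. -/
lemma isGδ_preimage {X Y : Type*} [TopologicalSpace X] [TopologicalSpace Y] {f : X → Y}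
    (hc : Continuous f) {T : Set Y} (hT : IsGδ T) : IsGδ (f ⁻¹' T) := by
  obtain ⟨S, hSo, hSc, rfl⟩ := hT
  rw [Set.sInter_eq_biInter, Set.preimage_iInter₂]
  exact IsGδ.biInter hSc fun s hs => ((hSo s hs).preimage hc).isGδ

/-- A λ-space: every countable subset is a Gδ. -/
def LambdaSpace (X : Type*) [TopologicalSpace X] : Prop :=
  ∀ A : Set X, A.Countable → IsGδ A

theorem stmt_13 {X Y : Type*} [TopologicalSpace X] [TopologicalSpace Y] [T1Space X]
    (f : X → Y) (hc : Continuous f) (hfib : ∀ y : Y, (f ⁻¹' {y}).Finite)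
    (hY : LambdaSpace Y) : LambdaSpace X := by
  intro A hA
  set S : Set X := f ⁻¹' (f '' A) with hS
  have hSgδ : IsGδ S := isGδ_preimage hc (hY _ (hA.image f))
  have hScnt : S.Countable := by
    have : S ⊆ ⋃ a ∈ A, f ⁻¹' {f a} := by
      rintro x ⟨a, ha, hax⟩
      exact Set.mem_biUnion ha (by simp [hax.symm])
    exact (hA.biUnion fun a _ => (hfib (f a)).countable).mono this
  set D : Set X := S \ A with hD
  have hDcnt : D.Countable := hScnt.mono Set.diff_subset
  have hAeq : A = S ∩ Dᶜ := by
    ext x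
    constructor
    · intro hx
      exact ⟨Set.subset_preimage_image f A hx, fun h => h.2 hx⟩
    · rintro ⟨hxS, hxD⟩
      by_contra hxA
      exact hxD ⟨hxS, hxA⟩
  rw [hAeq]
  refine hSgδ.inter ?_
  have : Dᶜ = ⋂ x ∈ D, ({x}ᶜ : Set X) := by
    ext z
    simp only [Set.mem_compl_iff, Set.mem_iInter, Set.mem_singleton_iff]
    exact ⟨fun h i hi hz => h (hz ▸ hi), fun h hz => h z hz rfl⟩
  rw [this]
  exact IsGδ.biInter hDcnt fun x _ => (isOpen_compl_singleton).isGδ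
end

section
/- Let X be a T₁ topological space that is a countable union of closed subspaces F_n each of which is a λ-space in the subspace topology. Then X is a λ-space. -/
theorem stmt_14 {X : Type*} [TopologicalSpace X] [T1Space X]
    (F : ℕ → Set X) (hFcl : ∀ n, IsClosed (F n)) (hFU : (⋃ n, F n) = Set.univ)
    (hF : ∀ n, LambdaSpace (F n)) : LambdaSpace X := by
  intro A hA
  -- For each n, the trace of A on F n is Gδ in the subspace
  have h1 : ∀ n : ℕ, ∃ U : ℕ → Set X, (∀ k, IsOpen (U k)) ∧
      (Subtype.val ⁻¹' A : Set (F n)) = ⋂ k, (Subtype.val ⁻¹' (U k)) := by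
    intro n
    have hGδ : IsGδ (Subtype.val ⁻¹' A : Set (F n)) :=
      hF n _ (hA.preimage Subtype.val_injective)
    obtain ⟨V, hVopen, hVeq⟩ := hGδ.eq_iInter_nat
    choose U hUopen hUeq using fun k => (isOpen_induced_iff).1 (hVopen k)
    exact ⟨U, hUopen, by rw [hVeq]; exact Set.iInter_congr fun k => (hUeq k).symm⟩
  choose U hUopen hUeq using h1
  have key : A = ⋂ p : ℕ × ℕ, ((F p.1)ᶜ ∪ U p.1 p.2) := by
    ext x
    constructor
    · rintro hx
      simp only [Set.mem_iInter]
      rintro ⟨n, k⟩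
      by_cases hxn : x ∈ F n
      · have : (⟨x, hxn⟩ : F n) ∈ (Subtype.val ⁻¹' A : Set (F n)) := hx
        rw [hUeq n] at this
        exact Or.inr (Set.mem_iInter.1 this k)
      · exact Or.inl hxn
    · intro hx
      have hxuniv : x ∈ ⋃ n, F n := hFU ▸ Set.mem_univ x
      obtain ⟨m, hm⟩ := Set.mem_iUnion.1 hxuniv
      have hU : ∀ k, x ∈ U m k := by
        intro k
        have := Set.mem_iInter.1 hx (m, k)
        rcases this with h | h
        · exact absurd hm h
        · exact h
      have : (⟨x, hm⟩ : F m) ∈ ⋂ k, (Subtype.val ⁻¹' (U m k) : Set (F m)) :=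
        Set.mem_iInter.2 fun k => hU k
      rw [← hUeq m] at this
      exact this
  rw [key]
  exact .iInter fun p => ((hFcl p.1).isOpen_compl.union (hUopen p.1 p.2)).isGδ
end
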